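/- Let A and B be unital bornological algebras arising as unitarizations A = A₀⁺, B = B₀⁺. The unital free product A * B decomposes as a bornological vector space as A ⊗ B ⊕ ⊕_{j>0} Ω^j(A₀) ⊗ Ω^j(B₀), where the multiplication corresponds to the Fedosov product (x₁ ⊗ y₁) ∘ (x₂ ⊗ y₂) = x₁x₂ ⊗ y₁y₂ − (−1)^{|x₁|} x₁dx₂ ⊗ dy₁y₂, and an element a₀da₁⋯daₙ ⊗ b₀db₁⋯dbₙ corresponds to a₀b₀[a₁,b₁]⋯[aₙ,bₙ] in the free product. -/

import Mathlib

set_option linter.unusedSectionVars false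
set_option maxHeartbeats 1000000


/-!
STATEMENT 17: The unital free product `A⁺ * B⁺` decomposes, as a vector space, as
`A⁺ ⊗ B⁺ ⊕ ⊕_{j>0} Ω^j(A) ⊗ Ω^j(B)`, the element `a₀da₁⋯daₙ ⊗ b₀db₁⋯dbₙ`
corresponding to `a₀b₀[a₁,b₁]⋯[aₙ,bₙ]` in the free product (so that the transported
multiplication is the Fedosov product).
-/

open scoped TensorProduct DirectSum

variable (A B : Type) [NonUnitalRing A] [Module ℝ A]
  [IsScalarTower ℝ A A] [SMulCommClass ℝ A A]
  [NonUnitalRing B] [Module ℝ B]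
  [IsScalarTower ℝ B B] [SMulCommClass ℝ B B]

/-- The `n`-th tensor power. -/
abbrev TP (R : Type) [AddCommGroup R] [Module ℝ R] (n : ℕ) : Type :=
  PiTensorProduct ℝ (fun _ : Fin n => R)

/-- The summands of the decomposition of the unital free product:
`Piece 0 = A⁺ ⊗ B⁺` and `Piece (j+1) = Ω^{j+1}(A) ⊗ Ω^{j+1}(B)`, where
`Ω^j(R) = R⁺ ⊗ R^{⊗j}`. -/
def Piece : ℕ → Type
  | 0 => Unitization ℝ A ⊗[ℝ] Unitization ℝ B
  | j + 1 => (Unitization ℝ A ⊗[ℝ] TP A (j + 1)) ⊗[ℝ] (Unitization ℝ B ⊗[ℝ] TP B (j + 1))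

noncomputable instance PieceAddCommGroup : ∀ j, AddCommGroup (Piece A B j)
  | 0 => inferInstanceAs (AddCommGroup (Unitization ℝ A ⊗[ℝ] Unitization ℝ B))
  | j + 1 => inferInstanceAs (AddCommGroup
      ((Unitization ℝ A ⊗[ℝ] TP A (j + 1)) ⊗[ℝ] (Unitization ℝ B ⊗[ℝ] TP B (j + 1))))

noncomputable instance PieceModule : ∀ j, Module ℝ (Piece A B j)
  | 0 => inferInstanceAs (Module ℝ (Unitization ℝ A ⊗[ℝ] Unitization ℝ B))
  | j + 1 => inferInstanceAs (Module ℝ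
      ((Unitization ℝ A ⊗[ℝ] TP A (j + 1)) ⊗[ℝ] (Unitization ℝ B ⊗[ℝ] TP B (j + 1))))



/-- cons map on tensor powers -/
noncomputable def consT (R : Type) [AddCommGroup R] [Module ℝ R] (n : ℕ) :
    R →ₗ[ℝ] TP R n →ₗ[ℝ] TP R (n + 1) :=
  (PiTensorProduct.lift (R := ℝ)).toLinearMap.comp
    (MultilinearMap.curryLeft (PiTensorProduct.tprod ℝ (s := fun _ : Fin (n+1) => R)))

@[simp] lemma consT_tprod (R : Type) [AddCommGroup R] [Module ℝ R] (n : ℕ)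
    (x : R) (s : Fin n → R) :
    consT R n x (PiTensorProduct.tprod ℝ s) = PiTensorProduct.tprod ℝ (Fin.cons x s) := by
  simp [consT, MultilinearMap.curryLeft]

noncomputable def singT (R : Type) [AddCommGroup R] [Module ℝ R] : R →ₗ[ℝ] TP R 1 :=
  (consT R 0).flip (PiTensorProduct.tprod ℝ Fin.elim0)

@[simp] lemma singT_apply (R : Type) [AddCommGroup R] [Module ℝ R] (x : R) (s : Fin 1 → R)
    (h : s 0 = x) : singT R x = PiTensorProduct.tprod ℝ s := by
  subst h
  simp [singT]; congr 1; ext i; fin_cases i; simp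

section Aux
variable {A B}

noncomputable abbrev VV (A B : Type) [NonUnitalRing A] [Module ℝ A]
  [IsScalarTower ℝ A A] [SMulCommClass ℝ A A]
  [NonUnitalRing B] [Module ℝ B]
  [IsScalarTower ℝ B B] [SMulCommClass ℝ B B] := ⨁ j, Piece A B j

lemma of0_add (x y : Unitization ℝ A ⊗[ℝ] Unitization ℝ B) :
    DirectSum.of (Piece A B) 0 (x + y) =
      DirectSum.of (Piece A B) 0 x + DirectSum.of (Piece A B) 0 y := map_add _ _ _

lemma ofS_add (j : ℕ) (x y : (Unitization ℝ A ⊗[ℝ] TP A (j + 1)) ⊗[ℝ]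
      (Unitization ℝ B ⊗[ℝ] TP B (j + 1))) :
    DirectSum.of (Piece A B) (j + 1) (x + y) =
      DirectSum.of (Piece A B) (j + 1) x + DirectSum.of (Piece A B) (j + 1) y := map_add _ _ _

lemma of0_smul (r : ℝ) (x : Unitization ℝ A ⊗[ℝ] Unitization ℝ B) :
    DirectSum.of (Piece A B) 0 (r • x) = r • DirectSum.of (Piece A B) 0 x :=
  map_smul (DirectSum.lof ℝ ℕ (Piece A B) 0) r x

lemma ofS_smul (j : ℕ) (r : ℝ) (x : (Unitization ℝ A ⊗[ℝ] TP A (j + 1)) ⊗[ℝ]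
      (Unitization ℝ B ⊗[ℝ] TP B (j + 1))) :
    DirectSum.of (Piece A B) (j + 1) (r • x) = r • DirectSum.of (Piece A B) (j + 1) x :=
  map_smul (DirectSum.lof ℝ ℕ (Piece A B) (j + 1)) r x

lemma of0_zero :
    DirectSum.of (Piece A B) 0 (0 : Unitization ℝ A ⊗[ℝ] Unitization ℝ B) = 0 := map_zero _

lemma ofS_zero (j : ℕ) :
    DirectSum.of (Piece A B) (j + 1) (0 : (Unitization ℝ A ⊗[ℝ] TP A (j + 1)) ⊗[ℝ]
      (Unitization ℝ B ⊗[ℝ] TP B (j + 1))) = 0 := map_zero _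

/-- extensionality for maps out of `VV` -/
lemma Vext {W : Type*} [AddCommGroup W] [Module ℝ W] (f g : VV A B →ₗ[ℝ] W)
    (h0 : ∀ (a₀ : Unitization ℝ A) (b₀ : Unitization ℝ B),
      f (DirectSum.of (Piece A B) 0 (a₀ ⊗ₜ[ℝ] b₀)) = g (DirectSum.of (Piece A B) 0 (a₀ ⊗ₜ[ℝ] b₀)))
    (hS : ∀ (j : ℕ) (a₀ : Unitization ℝ A) (s : TP A (j+1)) (b₀ : Unitization ℝ B)
      (t : TP B (j+1)),
      f (DirectSum.of (Piece A B) (j+1) ((a₀ ⊗ₜ[ℝ] s) ⊗ₜ[ℝ] (b₀ ⊗ₜ[ℝ] t))) =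
      g (DirectSum.of (Piece A B) (j+1) ((a₀ ⊗ₜ[ℝ] s) ⊗ₜ[ℝ] (b₀ ⊗ₜ[ℝ] t)))) : f = g := by
  refine DirectSum.linearMap_ext ℝ fun j => ?_
  match j with
  | 0 =>
    exact TensorProduct.ext (LinearMap.ext₂ fun a₀ b₀ => by
      exact h0 a₀ b₀)
  | j + 1 =>
    refine TensorProduct.ext (LinearMap.ext₂ fun x y => ?_)
    change f (DirectSum.of (Piece A B) (j+1) (x ⊗ₜ[ℝ] y)) =
      g (DirectSum.of (Piece A B) (j+1) (x ⊗ₜ[ℝ] y))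
    induction x using TensorProduct.induction_on with
    | zero => simp [ofS_zero]
    | add x₁ x₂ h₁ h₂ =>
      rw [TensorProduct.add_tmul, ofS_add, map_add, map_add, h₁, h₂]
    | tmul a₀ s =>
      induction y using TensorProduct.induction_on with
      | zero => simp [ofS_zero]
      | add y₁ y₂ k₁ k₂ =>
        rw [TensorProduct.tmul_add, ofS_add, map_add, map_add, k₁, k₂]
      | tmul b₀ t => exact hS j a₀ s b₀ t

end Aux

section Aux2
variable {A B}
variable {FP : Type} [Ring FP] [Algebra ℝ FP]
  (iA : Unitization ℝ A →ₐ[ℝ] FP) (iB : Unitization ℝ B →ₐ[ℝ] FP)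

/-- bilinear commutator map -/
noncomputable def commM : A →ₗ[ℝ] B →ₗ[ℝ] FP :=
  LinearMap.mk₂ ℝ
    (fun a b => iA (Unitization.inr a) * iB (Unitization.inr b) -
      iB (Unitization.inr b) * iA (Unitization.inr a))
    (by intro a a' b
        simp only [Unitization.inr_add, map_add, add_mul, mul_add]; abel)
    (by intro r a b
        simp only [Unitization.inr_smul, map_smul, smul_mul_assoc, mul_smul_comm, smul_sub])
    (by intro a b b'
        simp only [Unitization.inr_add, map_add, add_mul, mul_add]; abel)
    (by intro r a b
        simp only [Unitization.inr_smul, map_smul, smul_mul_assoc, mul_smul_comm, smul_sub])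

@[simp] lemma commM_apply (a : A) (b : B) :
    commM iA iB a b = iA (Unitization.inr a) * iB (Unitization.inr b) -
      iB (Unitization.inr b) * iA (Unitization.inr a) := rfl

/-- the iterated-commutator multilinear pairing -/
noncomputable def Cn (n : ℕ) : TP A n →ₗ[ℝ] TP B n →ₗ[ℝ] FP :=
  (PiTensorProduct.map₂ (fun _ : Fin n => TensorProduct.mk ℝ A B)).compr₂
    (PiTensorProduct.lift
      ((MultilinearMap.mkPiAlgebraFin ℝ n FP).compLinearMap
        (fun _ => TensorProduct.lift (commM iA iB))))

@[simp] lemma Cn_tprod (n : ℕ) (a : Fin n → A) (b : Fin n → B) :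
    Cn iA iB n (PiTensorProduct.tprod ℝ a) (PiTensorProduct.tprod ℝ b) =
      (List.ofFn (fun i => commM iA iB (a i) (b i))).prod := by
  simp [Cn, PiTensorProduct.map₂_tprod_tprod]

/-- the map on degree 0 -/
noncomputable def phi0 : Piece A B 0 →ₗ[ℝ] FP :=
  TensorProduct.lift (LinearMap.mk₂ ℝ (fun a b => iA a * iB b)
    (by intro a a' b; simp [add_mul]) (by intro r a b; simp [smul_mul_assoc])
    (by intro a b b'; simp [mul_add]) (by intro r a b; simp [mul_smul_comm]))

@[simp] lemma phi0_tmul (a : Unitization ℝ A) (b : Unitization ℝ B) :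
    phi0 iA iB (a ⊗ₜ[ℝ] b) = iA a * iB b := rfl

/-- the map on degree `j+1` -/
noncomputable def phiS (j : ℕ) : Piece A B (j+1) →ₗ[ℝ] FP :=
  (LinearMap.mul' ℝ FP).comp
    ((TensorProduct.map (phi0 iA iB) (TensorProduct.lift (Cn iA iB (j+1)))).comp
      (TensorProduct.tensorTensorTensorComm ℝ (Unitization ℝ A) (TP A (j+1))
        (Unitization ℝ B) (TP B (j+1))).toLinearMap)

@[simp] lemma phiS_tmul (j : ℕ) (a₀ : Unitization ℝ A) (s : TP A (j+1))
    (b₀ : Unitization ℝ B) (t : TP B (j+1)) :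
    phiS iA iB j ((a₀ ⊗ₜ[ℝ] s) ⊗ₜ[ℝ] (b₀ ⊗ₜ[ℝ] t)) =
      iA a₀ * iB b₀ * Cn iA iB (j+1) s t := by
  rfl

noncomputable def phiP : ∀ j, Piece A B j →ₗ[ℝ] FP
  | 0 => phi0 iA iB
  | j + 1 => phiS iA iB j

/-- the explicit linear map `V → FP` -/
noncomputable def Phi0 : VV A B →ₗ[ℝ] FP :=
  DirectSum.toModule ℝ ℕ FP (phiP iA iB)

@[simp] lemma Phi0_of0 (a : Unitization ℝ A) (b : Unitization ℝ B) :
    Phi0 iA iB (DirectSum.of (Piece A B) 0 (a ⊗ₜ[ℝ] b)) = iA a * iB b := by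
  erw [Phi0, ← DirectSum.lof_eq_of ℝ, DirectSum.toModule_lof]; rfl

@[simp] lemma Phi0_ofS (j : ℕ) (a₀ : Unitization ℝ A) (s : TP A (j+1))
    (b₀ : Unitization ℝ B) (t : TP B (j+1)) :
    Phi0 iA iB (DirectSum.of (Piece A B) (j+1) ((a₀ ⊗ₜ[ℝ] s) ⊗ₜ[ℝ] (b₀ ⊗ₜ[ℝ] t))) =
      iA a₀ * iB b₀ * Cn iA iB (j+1) s t := by
  erw [Phi0, ← DirectSum.lof_eq_of ℝ, DirectSum.toModule_lof]
  exact phiS_tmul iA iB j a₀ s b₀ t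

end Aux2

section Act
variable {A B}

/-- left multiplication by `a₀ ∈ A⁺` on each piece -/
noncomputable def aComp (a₀ : Unitization ℝ A) : ∀ j, Piece A B j →ₗ[ℝ] Piece A B j
  | 0 => TensorProduct.map (LinearMap.mulLeft ℝ a₀) LinearMap.id
  | _ + 1 => TensorProduct.map (TensorProduct.map (LinearMap.mulLeft ℝ a₀) LinearMap.id)
      LinearMap.id

/-- left multiplication by `a₀ ∈ A⁺` on `V` -/
noncomputable def alphaFun (a₀ : Unitization ℝ A) : VV A B →ₗ[ℝ] VV A B :=
  DirectSum.toModule ℝ ℕ (VV A B)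
    (fun j => (DirectSum.lof ℝ ℕ (Piece A B) j).comp (aComp (B := B) a₀ j))

@[simp] lemma alphaFun_of0 (a₀ x : Unitization ℝ A) (y : Unitization ℝ B) :
    alphaFun (B := B) a₀ (DirectSum.of (Piece A B) 0 (x ⊗ₜ[ℝ] y)) =
      DirectSum.of (Piece A B) 0 ((a₀ * x) ⊗ₜ[ℝ] y) := by
  erw [alphaFun, ← DirectSum.lof_eq_of ℝ, DirectSum.toModule_lof]
  simp only [LinearMap.coe_comp, Function.comp_apply, DirectSum.lof_eq_of]; rfl

@[simp] lemma alphaFun_ofS (a₀ : Unitization ℝ A) (j : ℕ) (x : Unitization ℝ A) (s : TP A (j+1))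
    (y : Unitization ℝ B) (t : TP B (j+1)) :
    alphaFun (B := B) a₀ (DirectSum.of (Piece A B) (j+1) ((x ⊗ₜ[ℝ] s) ⊗ₜ[ℝ] (y ⊗ₜ[ℝ] t))) =
      DirectSum.of (Piece A B) (j+1) (((a₀ * x) ⊗ₜ[ℝ] s) ⊗ₜ[ℝ] (y ⊗ₜ[ℝ] t)) := by
  erw [alphaFun, ← DirectSum.lof_eq_of ℝ, DirectSum.toModule_lof]
  simp only [LinearMap.coe_comp, Function.comp_apply, DirectSum.lof_eq_of]; rfl

/-- the action of `A⁺` on `V` as an algebra homomorphism -/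
noncomputable def alphaAlg : Unitization ℝ A →ₐ[ℝ] Module.End ℝ (VV A B) :=
  AlgHom.ofLinearMap
    { toFun := alphaFun (B := B)
      map_add' := fun a a' => by
        apply Vext <;> intros <;>
          simp [add_mul, TensorProduct.add_tmul, map_add, of0_add, ofS_add]
      map_smul' := fun r a => by
        apply Vext <;> intros <;>
          (simp only [LinearMap.smul_apply, alphaFun_of0, alphaFun_ofS, smul_mul_assoc,
            ← TensorProduct.smul_tmul'];
           simp only [← DirectSum.lof_eq_of ℝ, map_smul, RingHom.id_apply, of0_smul, ofS_smul]) }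
    (by apply Vext <;> intros <;> simp)
    (fun a a' => by
      apply Vext <;> intros <;> simp [mul_assoc, Module.End.mul_apply])

@[simp] lemma alphaAlg_apply (a₀ : Unitization ℝ A) (v : VV A B) :
    alphaAlg (B := B) a₀ v = alphaFun a₀ v := rfl

@[simp] lemma consT_zero (R : Type) [AddCommGroup R] [Module ℝ R] (n : ℕ) (s : TP R n) :
    consT R n 0 s = 0 := by rw [map_zero]; rfl

@[simp] lemma singT_zero (R : Type) [AddCommGroup R] [Module ℝ R] : singT R 0 = 0 :=
  map_zero _

/-- `b₀ ↦ snd (b * b₀)` -/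
noncomputable def NmapB (b : B) : Unitization ℝ B →ₗ[ℝ] B :=
  (Unitization.sndHom ℝ ℝ B).comp (LinearMap.mulLeft ℝ (Unitization.inr b))

@[simp] lemma NmapB_apply (b : B) (y : Unitization ℝ B) :
    NmapB b y = (Unitization.inr b * y).snd := rfl

/-- `a₀ ⊗ s ↦ 1 ⊗ (da₀)s`, degree 0 case -/
noncomputable def dA0 : Unitization ℝ A →ₗ[ℝ] Unitization ℝ A ⊗[ℝ] TP A 1 :=
  (TensorProduct.mk ℝ (Unitization ℝ A) (TP A 1) 1).comp
    ((singT A).comp (Unitization.sndHom ℝ ℝ A))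

/-- `a₀ ⊗ s ↦ 1 ⊗ (da₀)s` -/
noncomputable def dAS (j : ℕ) :
    (Unitization ℝ A ⊗[ℝ] TP A (j+1)) →ₗ[ℝ] (Unitization ℝ A ⊗[ℝ] TP A (j+2)) :=
  (TensorProduct.mk ℝ (Unitization ℝ A) (TP A (j+2)) 1).comp
    (TensorProduct.lift ((consT A (j+1)).comp (Unitization.sndHom ℝ ℝ A)))

@[simp] lemma dAS_tmul (j : ℕ) (x : Unitization ℝ A) (s : TP A (j+1)) :
    dAS j (x ⊗ₜ[ℝ] s) = (1 : Unitization ℝ A) ⊗ₜ[ℝ] consT A (j+1) x.snd s := rfl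

noncomputable def gB0 (c : Unitization ℝ B) (q : Unitization ℝ B →ₗ[ℝ] B) :
    Unitization ℝ B →ₗ[ℝ] Unitization ℝ B ⊗[ℝ] TP B 1 :=
  (TensorProduct.mk ℝ (Unitization ℝ B) (TP B 1) c).comp ((singT B).comp q)

noncomputable def gBS (j : ℕ) (c : Unitization ℝ B) (q : Unitization ℝ B →ₗ[ℝ] B) :
    (Unitization ℝ B ⊗[ℝ] TP B (j+1)) →ₗ[ℝ] (Unitization ℝ B ⊗[ℝ] TP B (j+2)) :=
  (TensorProduct.mk ℝ (Unitization ℝ B) (TP B (j+2)) c).comp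
    (TensorProduct.lift ((consT B (j+1)).comp q))

@[simp] lemma gBS_tmul (j : ℕ) (c : Unitization ℝ B) (q : Unitization ℝ B →ₗ[ℝ] B)
    (y : Unitization ℝ B) (t : TP B (j+1)) :
    gBS j c q (y ⊗ₜ[ℝ] t) = c ⊗ₜ[ℝ] consT B (j+1) (q y) t := rfl

/-- left multiplication by `b ∈ B` on `V` -/
noncomputable def betaFun (b : B) : VV A B →ₗ[ℝ] VV A B :=
  DirectSum.toModule ℝ ℕ (VV A B) fun j => match j with
  | 0 => (DirectSum.lof ℝ ℕ (Piece A B) 0).comp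
          (TensorProduct.map LinearMap.id (LinearMap.mulLeft ℝ (Unitization.inr b)))
        - (DirectSum.lof ℝ ℕ (Piece A B) 1).comp
          (TensorProduct.map dA0 (gB0 1 (NmapB b)))
        + (DirectSum.lof ℝ ℕ (Piece A B) 1).comp
          (TensorProduct.map dA0 (gB0 (Unitization.inr b) (Unitization.sndHom ℝ ℝ B)))
  | j+1 => (DirectSum.lof ℝ ℕ (Piece A B) (j+1)).comp
          (TensorProduct.map LinearMap.id
            (TensorProduct.map (LinearMap.mulLeft ℝ (Unitization.inr b)) LinearMap.id))
        - (DirectSum.lof ℝ ℕ (Piece A B) (j+2)).comp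
          (TensorProduct.map (dAS j) (gBS j 1 (NmapB b)))
        + (DirectSum.lof ℝ ℕ (Piece A B) (j+2)).comp
          (TensorProduct.map (dAS j) (gBS j (Unitization.inr b) (Unitization.sndHom ℝ ℝ B)))

lemma betaFun_of0 (b : B) (x : Unitization ℝ A) (y : Unitization ℝ B) :
    betaFun (A := A) b (DirectSum.of (Piece A B) 0 (x ⊗ₜ[ℝ] y)) =
      DirectSum.of (Piece A B) 0 (x ⊗ₜ[ℝ] (Unitization.inr b * y))
      - DirectSum.of (Piece A B) 1
          (((1 : Unitization ℝ A) ⊗ₜ[ℝ] singT A x.snd) ⊗ₜ[ℝ]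
           ((1 : Unitization ℝ B) ⊗ₜ[ℝ] singT B (NmapB b y)))
      + DirectSum.of (Piece A B) 1
          (((1 : Unitization ℝ A) ⊗ₜ[ℝ] singT A x.snd) ⊗ₜ[ℝ]
           (Unitization.inr b ⊗ₜ[ℝ] singT B y.snd)) := by
  erw [betaFun, ← DirectSum.lof_eq_of ℝ, DirectSum.toModule_lof]
  simp only [LinearMap.add_apply, LinearMap.sub_apply, LinearMap.coe_comp, Function.comp_apply,
    DirectSum.lof_eq_of]
  rfl

lemma betaFun_ofS (b : B) (j : ℕ) (x : Unitization ℝ A) (s : TP A (j+1))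
    (y : Unitization ℝ B) (t : TP B (j+1)) :
    betaFun (A := A) b (DirectSum.of (Piece A B) (j+1) ((x ⊗ₜ[ℝ] s) ⊗ₜ[ℝ] (y ⊗ₜ[ℝ] t))) =
      DirectSum.of (Piece A B) (j+1) ((x ⊗ₜ[ℝ] s) ⊗ₜ[ℝ] ((Unitization.inr b * y) ⊗ₜ[ℝ] t))
      - DirectSum.of (Piece A B) (j+2)
          (((1 : Unitization ℝ A) ⊗ₜ[ℝ] consT A (j+1) x.snd s) ⊗ₜ[ℝ]
           ((1 : Unitization ℝ B) ⊗ₜ[ℝ] consT B (j+1) (NmapB b y) t))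
      + DirectSum.of (Piece A B) (j+2)
          (((1 : Unitization ℝ A) ⊗ₜ[ℝ] consT A (j+1) x.snd s) ⊗ₜ[ℝ]
           (Unitization.inr b ⊗ₜ[ℝ] consT B (j+1) y.snd t)) := by
  erw [betaFun, ← DirectSum.lof_eq_of ℝ, DirectSum.toModule_lof]
  simp only [LinearMap.add_apply, LinearMap.sub_apply, LinearMap.coe_comp, Function.comp_apply,
    DirectSum.lof_eq_of]
  rfl

@[simp] lemma ofz (i : ℕ) : DirectSum.of (Piece A B) i 0 = 0 := map_zero _

/-- the action of `B` on `V` -/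
noncomputable def betaNU : B →ₙₐ[ℝ] Module.End ℝ (VV A B) :=
  { toFun := betaFun (A := A)
    map_add' := fun b c => by
      apply Vext <;> intros <;>
        (simp only [LinearMap.add_apply, betaFun_of0, betaFun_ofS, Unitization.inr_add,
          add_mul, map_add, LinearMap.add_apply, TensorProduct.add_tmul,
          TensorProduct.tmul_add, NmapB_apply, Unitization.snd_add, of0_add, ofS_add];
         abel)
    map_smul' := fun r b => by
      apply Vext <;> intros <;>
        (simp only [LinearMap.smul_apply, RingHom.id_apply, betaFun_of0, betaFun_ofS,
          Unitization.inr_smul, smul_mul_assoc, map_smul, LinearMap.smul_apply,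
          NmapB_apply, Unitization.snd_smul,
          ← TensorProduct.smul_tmul', TensorProduct.tmul_smul];
         simp only [← TensorProduct.smul_tmul', ← DirectSum.lof_eq_of ℝ, map_smul,
           smul_sub, smul_add, MonoidHom.id_apply, of0_smul, ofS_smul])
    map_zero' := by
      apply Vext <;> intros <;>
        simp only [betaFun_of0, betaFun_ofS, Unitization.inr_zero, zero_mul,
          NmapB_apply, Unitization.snd_zero, singT_zero, consT_zero,
          TensorProduct.zero_tmul, TensorProduct.tmul_zero, ofz, sub_zero, add_zero,
          LinearMap.zero_apply, of0_zero, ofS_zero]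
    map_mul' := fun b c => by
      apply Vext <;> intros <;>
        (simp only [Module.End.mul_apply, betaFun_of0, betaFun_ofS, map_sub, map_add,
          Unitization.snd_one, singT_zero, consT_zero, TensorProduct.zero_tmul,
          TensorProduct.tmul_zero, ofz, mul_one, one_mul, sub_zero, add_zero, zero_sub, of0_zero, ofS_zero,
          Unitization.snd_inr, NmapB_apply, ← Unitization.inr_mul, ← mul_assoc];
         abel) }

/-- the action of `B⁺` on `V` -/
noncomputable def betaAlg : Unitization ℝ B →ₐ[ℝ] Module.End ℝ (VV A B) :=
  Unitization.lift (betaNU (A := A))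

end Act

section Main
variable {A B}
variable {FP : Type} [Ring FP] [Algebra ℝ FP]
  (iA : Unitization ℝ A →ₐ[ℝ] FP) (iB : Unitization ℝ B →ₐ[ℝ] FP)

lemma iA_split (a₀ : Unitization ℝ A) :
    iA a₀ = algebraMap ℝ FP a₀.fst + iA (Unitization.inr a₀.snd) := by
  conv_lhs => rw [← Unitization.inl_fst_add_inr_snd_eq a₀]
  rw [map_add, ← Unitization.algebraMap_eq_inl, AlgHom.commutes]

lemma iB_split (b₀ : Unitization ℝ B) :
    iB b₀ = algebraMap ℝ FP b₀.fst + iB (Unitization.inr b₀.snd) := by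
  conv_lhs => rw [← Unitization.inl_fst_add_inr_snd_eq b₀]
  rw [map_add, ← Unitization.algebraMap_eq_inl, AlgHom.commutes]

lemma commA_full (a₀ : Unitization ℝ A) (u : FP) :
    iA (Unitization.inr a₀.snd) * u - u * iA (Unitization.inr a₀.snd)
      = iA a₀ * u - u * iA a₀ := by
  rw [iA_split iA a₀, add_mul, mul_add, Algebra.commutes a₀.fst u]
  abel

lemma commB_full (b₀ : Unitization ℝ B) (u : FP) :
    u * iB (Unitization.inr b₀.snd) - iB (Unitization.inr b₀.snd) * u
      = u * iB b₀ - iB b₀ * u := by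
  rw [iB_split iB b₀, add_mul, mul_add, Algebra.commutes b₀.fst u]
  abel

lemma Cn_sing (x : A) (y : B) :
    Cn iA iB (0+1) (singT A x) (singT B y) = commM iA iB x y := by
  rw [singT_apply A x (fun _ => x) rfl, singT_apply B y (fun _ => y) rfl, Cn_tprod]
  simp

lemma Cn_cons (n : ℕ) (x : A) (y : B) (s : TP A n) (t : TP B n) :
    Cn iA iB (n+1) (consT A n x s) (consT B n y t) =
      commM iA iB x y * Cn iA iB n s t := by
  induction s using PiTensorProduct.induction_on with
  | smul_tprod r a =>
    induction t using PiTensorProduct.induction_on with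
    | smul_tprod q b =>
      simp only [map_smul, LinearMap.smul_apply, consT_tprod, Cn_tprod]
      rw [List.ofFn_succ]
      simp [Fin.cons_zero, Fin.cons_succ, mul_smul_comm, smul_smul, mul_comm r q]
    | add t₁ t₂ h₁ h₂ =>
      simp only [map_add, LinearMap.smul_apply, map_smul] at h₁ h₂ ⊢
      rw [h₁, h₂, mul_add]
  | add s₁ s₂ h₁ h₂ =>
    simp only [map_add, LinearMap.add_apply] at h₁ h₂ ⊢
    rw [h₁, h₂, mul_add]

lemma Phi0_alphaAlg (a₀ : Unitization ℝ A) (v : VV A B) :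
    Phi0 iA iB (alphaAlg (B := B) a₀ v) = iA a₀ * Phi0 iA iB v := by
  have : (Phi0 iA iB).comp (alphaAlg (B := B) a₀ : VV A B →ₗ[ℝ] VV A B)
      = (LinearMap.mulLeft ℝ (iA a₀)).comp (Phi0 iA iB) := by
    apply Vext <;> intros <;>
      simp [map_mul, mul_assoc]
  exact DFunLike.congr_fun this v

lemma Phi0_betaNU (b : B) (v : VV A B) :
    Phi0 iA iB (betaFun (A := A) b v) = iB (Unitization.inr b) * Phi0 iA iB v := by
  have : (Phi0 iA iB).comp (betaFun (A := A) b)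
      = (LinearMap.mulLeft ℝ (iB (Unitization.inr b))).comp (Phi0 iA iB) := by
    apply Vext
    · intro x y
      simp only [LinearMap.coe_comp, Function.comp_apply, betaFun_of0, map_sub, map_add,
        Phi0_of0, Phi0_ofS, LinearMap.mulLeft_apply, Cn_sing, map_one, one_mul, map_mul]
      have e1 : (Unitization.inr (NmapB b y) : Unitization ℝ B) = Unitization.inr b * y := by
        refine Unitization.ext ?_ rfl
        simp [Unitization.fst_mul]
      have e3 : commM iA iB x.snd (NmapB b y)
          = iA x * (iB (Unitization.inr b) * iB y)
            - (iB (Unitization.inr b) * iB y) * iA x := by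
        rw [commM_apply, e1, map_mul, ← commA_full iA x (iB (Unitization.inr b) * iB y)]
      have e4 : commM iA iB x.snd y.snd
          = iA x * iB y - iB y * iA x := by
        rw [commM_apply, commB_full iB y (iA (Unitization.inr x.snd)),
          commA_full iA x (iB y)]
      rw [e3, e4]
      noncomm_ring
    · intro j x s y t
      simp only [LinearMap.coe_comp, Function.comp_apply, betaFun_ofS, map_sub, map_add,
        Phi0_ofS, LinearMap.mulLeft_apply, Cn_cons, map_one, one_mul, map_mul]
      have e1 : (Unitization.inr (NmapB b y) : Unitization ℝ B) = Unitization.inr b * y := by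
        refine Unitization.ext ?_ rfl
        simp [Unitization.fst_mul]
      have e3 : commM iA iB x.snd (NmapB b y)
          = iA x * (iB (Unitization.inr b) * iB y)
            - (iB (Unitization.inr b) * iB y) * iA x := by
        rw [commM_apply, e1, map_mul, ← commA_full iA x (iB (Unitization.inr b) * iB y)]
      have e4 : commM iA iB x.snd y.snd
          = iA x * iB y - iB y * iA x := by
        rw [commM_apply, commB_full iB y (iA (Unitization.inr x.snd)),
          commA_full iA x (iB y)]
      rw [e3, e4]
      noncomm_ring
  exact DFunLike.congr_fun this v

lemma betaAlg_apply (b₀ : Unitization ℝ B) (v : VV A B) :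
    betaAlg (A := A) b₀ v = b₀.fst • v + betaFun b₀.snd v := by
  rw [betaAlg, Unitization.lift_apply, NonUnitalAlgHom.toAlgHom_apply]
  simp only [LinearMap.add_apply, Module.algebraMap_end_apply]
  rfl

/-- the vacuum vector -/
noncomputable def vac : VV A B :=
  DirectSum.of (Piece A B) 0 ((1 : Unitization ℝ A) ⊗ₜ[ℝ] (1 : Unitization ℝ B))

lemma smul_one_eq (r : ℝ) : (r • (1 : Unitization ℝ B)) = Unitization.inl r := by
  rw [← Unitization.algebraMap_eq_inl, Algebra.algebraMap_eq_smul_one]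

lemma betaAlg_vac (b₀ : Unitization ℝ B) :
    betaAlg (A := A) b₀ (vac (A := A) (B := B)) =
      DirectSum.of (Piece A B) 0 ((1 : Unitization ℝ A) ⊗ₜ[ℝ] b₀) := by
  rw [betaAlg_apply, vac, betaFun_of0]
  simp only [Unitization.snd_one, singT_zero, TensorProduct.tmul_zero,
    TensorProduct.zero_tmul, ofz, sub_zero, add_zero, mul_one, ofS_zero]
  rw [← of0_smul, TensorProduct.smul_tmul', TensorProduct.smul_tmul,
    ← of0_add, ← TensorProduct.tmul_add, smul_one_eq,
    Unitization.inl_fst_add_inr_snd_eq b₀]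

lemma betaAlg_W (b₀ : Unitization ℝ B) (n : ℕ) (s : TP A (n+1)) (t : TP B (n+1)) :
    betaAlg (A := A) b₀ (DirectSum.of (Piece A B) (n+1)
        (((1 : Unitization ℝ A) ⊗ₜ[ℝ] s) ⊗ₜ[ℝ] ((1 : Unitization ℝ B) ⊗ₜ[ℝ] t))) =
      DirectSum.of (Piece A B) (n+1)
        (((1 : Unitization ℝ A) ⊗ₜ[ℝ] s) ⊗ₜ[ℝ] (b₀ ⊗ₜ[ℝ] t)) := by
  rw [betaAlg_apply, betaFun_ofS]
  simp only [Unitization.snd_one, consT_zero, TensorProduct.tmul_zero,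
    TensorProduct.zero_tmul, ofz, sub_zero, add_zero, mul_one, ofS_zero]
  rw [← ofS_smul, TensorProduct.smul_tmul', TensorProduct.smul_tmul,
    TensorProduct.smul_tmul', ← ofS_add, ← TensorProduct.tmul_add,
    ← TensorProduct.add_tmul, smul_one_eq,
    Unitization.inl_fst_add_inr_snd_eq b₀]

lemma gamma_vac (a : A) (b : B) :
    alphaAlg (B := B) (Unitization.inr a) (betaAlg (A := A) (Unitization.inr b)
        (vac (A := A) (B := B)))
      - betaAlg (A := A) (Unitization.inr b) (alphaAlg (B := B) (Unitization.inr a)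
        (vac (A := A) (B := B))) =
      DirectSum.of (Piece A B) 1
        (((1 : Unitization ℝ A) ⊗ₜ[ℝ] singT A a) ⊗ₜ[ℝ]
         ((1 : Unitization ℝ B) ⊗ₜ[ℝ] singT B b)) := by
  rw [betaAlg_vac, vac]
  rw [alphaAlg_apply, alphaAlg_apply, alphaFun_of0, alphaFun_of0, betaAlg_apply, betaFun_of0]
  simp only [Unitization.fst_inr, zero_smul, zero_add, mul_one,
    Unitization.snd_inr, Unitization.snd_one, singT_zero, TensorProduct.tmul_zero, ofz,
    add_zero, NmapB_apply, TensorProduct.zero_tmul, ofS_zero]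
  abel

lemma gamma_W (a : A) (b : B) (n : ℕ) (s : TP A (n+1)) (t : TP B (n+1)) :
    alphaAlg (B := B) (Unitization.inr a) (betaAlg (A := A) (Unitization.inr b)
        (DirectSum.of (Piece A B) (n+1)
          (((1 : Unitization ℝ A) ⊗ₜ[ℝ] s) ⊗ₜ[ℝ] ((1 : Unitization ℝ B) ⊗ₜ[ℝ] t))))
      - betaAlg (A := A) (Unitization.inr b) (alphaAlg (B := B) (Unitization.inr a)
        (DirectSum.of (Piece A B) (n+1)
          (((1 : Unitization ℝ A) ⊗ₜ[ℝ] s) ⊗ₜ[ℝ] ((1 : Unitization ℝ B) ⊗ₜ[ℝ] t)))) =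
      DirectSum.of (Piece A B) (n+2)
        (((1 : Unitization ℝ A) ⊗ₜ[ℝ] consT A (n+1) a s) ⊗ₜ[ℝ]
         ((1 : Unitization ℝ B) ⊗ₜ[ℝ] consT B (n+1) b t)) := by
  rw [betaAlg_W, alphaAlg_apply, alphaAlg_apply, alphaFun_ofS, alphaFun_ofS,
    betaAlg_apply, betaFun_ofS]
  simp only [Unitization.fst_inr, zero_smul, zero_add, mul_one,
    Unitization.snd_inr, Unitization.snd_one, consT_zero, TensorProduct.tmul_zero, ofz,
    add_zero, NmapB_apply, TensorProduct.zero_tmul, ofS_zero]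
  abel

/-- `FP` is generated by the images of `iA` and `iB`. -/
lemma gen_top
    (huniv : ∀ (D : Type) [Ring D] [Algebra ℝ D]
      (f : Unitization ℝ A →ₐ[ℝ] D) (g : Unitization ℝ B →ₐ[ℝ] D),
      ∃! h : FP →ₐ[ℝ] D, h.comp iA = f ∧ h.comp iB = g) (x : FP) :
    x ∈ Algebra.adjoin ℝ (Set.range iA ∪ Set.range iB) := by
  set S := Algebra.adjoin ℝ (Set.range iA ∪ Set.range iB) with hS
  have hiA : ∀ a, iA a ∈ S := fun a =>
    Algebra.subset_adjoin (Set.mem_union_left _ ⟨a, rfl⟩)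
  have hiB : ∀ b, iB b ∈ S := fun b =>
    Algebra.subset_adjoin (Set.mem_union_right _ ⟨b, rfl⟩)
  obtain ⟨k, ⟨hkA, hkB⟩, -⟩ := huniv S (iA.codRestrict S hiA) (iB.codRestrict S hiB)
  obtain ⟨m, -, hmu⟩ := huniv FP iA iB
  have h1 : (S.val.comp k).comp iA = iA :=
    AlgHom.ext fun a => congrArg S.val (DFunLike.congr_fun hkA a)
  have h2 : (S.val.comp k).comp iB = iB :=
    AlgHom.ext fun b => congrArg S.val (DFunLike.congr_fun hkB b)
  have heq := (hmu (S.val.comp k) ⟨h1, h2⟩).trans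
    (hmu (AlgHom.id ℝ FP) ⟨AlgHom.id_comp iA, AlgHom.id_comp iB⟩).symm
  have hx : S.val (k x) = x := by
    rw [← AlgHom.comp_apply, heq]; rfl
  rw [← hx]
  exact (k x).2

lemma Phi0_betaAlg (b₀ : Unitization ℝ B) (v : VV A B) :
    Phi0 iA iB (betaAlg (A := A) b₀ v) = iB b₀ * Phi0 iA iB v := by
  rw [betaAlg_apply, map_add, map_smul, Phi0_betaNU, iB_split iB b₀, add_mul,
    Algebra.smul_def]

end Main

/-- STATEMENT: if `FP` together with `ιA`, `ιB` is the unital free product `A⁺ * B⁺`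
(i.e. the coproduct of `A⁺` and `B⁺` in unital `ℝ`-algebras), then there is a linear
isomorphism `A⁺ ⊗ B⁺ ⊕ ⊕_{j>0} Ω^j(A) ⊗ Ω^j(B) ≃ A⁺ * B⁺` sending `a₀ ⊗ b₀` to
`a₀b₀` and `a₀da₁⋯daₙ ⊗ b₀db₁⋯dbₙ` to `a₀b₀[a₁,b₁]⋯[aₙ,bₙ]`. -/
theorem stmt17
    (FP : Type) [Ring FP] [Algebra ℝ FP]
    (iA : Unitization ℝ A →ₐ[ℝ] FP) (iB : Unitization ℝ B →ₐ[ℝ] FP)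
    (huniv : ∀ (D : Type) [Ring D] [Algebra ℝ D]
      (f : Unitization ℝ A →ₐ[ℝ] D) (g : Unitization ℝ B →ₐ[ℝ] D),
      ∃! h : FP →ₐ[ℝ] D, h.comp iA = f ∧ h.comp iB = g) :
    ∃ Φ : (⨁ j, Piece A B j) ≃ₗ[ℝ] FP,
      (∀ (a : Unitization ℝ A) (b : Unitization ℝ B),
        Φ (DirectSum.of (Piece A B) 0 (a ⊗ₜ[ℝ] b)) = iA a * iB b) ∧
      (∀ (j : ℕ) (a₀ : Unitization ℝ A) (a : Fin (j + 1) → A)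
          (b₀ : Unitization ℝ B) (b : Fin (j + 1) → B),
        Φ (DirectSum.of (Piece A B) (j + 1)
            ((a₀ ⊗ₜ[ℝ] PiTensorProduct.tprod ℝ a) ⊗ₜ[ℝ]
             (b₀ ⊗ₜ[ℝ] PiTensorProduct.tprod ℝ b))) =
          iA a₀ * iB b₀ *
            (List.ofFn (fun i : Fin (j + 1) =>
              iA (Unitization.inr (a i)) * iB (Unitization.inr (b i)) -
              iB (Unitization.inr (b i)) * iA (Unitization.inr (a i)))).prod) := by
  classical
  obtain ⟨ρ, ⟨hρA, hρB⟩, -⟩ :=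
    huniv (Module.End ℝ (VV A B)) (alphaAlg (B := B)) (betaAlg (A := A))
  have hA : ∀ a, ρ (iA a) = alphaAlg (B := B) a := fun a => DFunLike.congr_fun hρA a
  have hB : ∀ b, ρ (iB b) = betaAlg (A := A) b := fun b => DFunLike.congr_fun hρB b
  set vv := vac (A := A) (B := B) with hvv
  let hmap : FP →ₗ[ℝ] VV A B :=
    { toFun := fun x => ρ x vv
      map_add' := fun x y => by simp only [map_add, LinearMap.add_apply]
      map_smul' := fun r x => by simp only [map_smul, LinearMap.smul_apply, RingHom.id_apply] }
  have hmap_apply : ∀ x : FP, hmap x = ρ x vv := fun _ => rfl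
  have key : ∀ x : FP, ∀ v, Phi0 iA iB (ρ x v) = x * Phi0 iA iB v := by
    intro x
    induction gen_top iA iB huniv x using Algebra.adjoin_induction with
    | mem g hg =>
      intro v
      rcases hg with ⟨a, rfl⟩ | ⟨b, rfl⟩
      · rw [hA]; exact Phi0_alphaAlg iA iB a v
      · rw [hB]; exact Phi0_betaAlg iA iB b v
    | algebraMap r =>
      intro v
      rw [AlgHom.commutes, Module.algebraMap_end_apply, map_smul, Algebra.smul_def]
    | add x y hxm hym hx hy =>
      intro v
      rw [map_add, LinearMap.add_apply, map_add, hx, hy, add_mul]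
    | mul x y hxm hym hx hy =>
      intro v
      rw [map_mul, Module.End.mul_apply, hx, hy, mul_assoc]
  have Phivac : Phi0 iA iB vv = 1 := by
    rw [hvv, vac, Phi0_of0, map_one, map_one, one_mul]
  have hleft : ∀ x : FP, Phi0 iA iB (hmap x) = x := by
    intro x
    rw [hmap_apply, key x vv, Phivac, mul_one]
  have hinj : Function.Injective hmap := Function.LeftInverse.injective hleft
  have H0 : ∀ (a : Unitization ℝ A) (b : Unitization ℝ B),
      hmap (iA a * iB b) = DirectSum.of (Piece A B) 0 (a ⊗ₜ[ℝ] b) := by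
    intro a b
    rw [hmap_apply, map_mul, Module.End.mul_apply, hB, hvv, betaAlg_vac, hA,
      alphaAlg_apply, alphaFun_of0, mul_one]
  have Hn : ∀ (n : ℕ) (a : Fin (n+1) → A) (b : Fin (n+1) → B),
      ρ ((List.ofFn (fun i : Fin (n + 1) =>
          iA (Unitization.inr (a i)) * iB (Unitization.inr (b i)) -
          iB (Unitization.inr (b i)) * iA (Unitization.inr (a i)))).prod) vv
      = DirectSum.of (Piece A B) (n+1)
          (((1 : Unitization ℝ A) ⊗ₜ[ℝ] PiTensorProduct.tprod ℝ a) ⊗ₜ[ℝ]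
           ((1 : Unitization ℝ B) ⊗ₜ[ℝ] PiTensorProduct.tprod ℝ b)) := by
    intro n
    induction n with
    | zero =>
      intro a b
      rw [List.ofFn_succ]
      simp only [List.ofFn_zero, List.prod_cons, List.prod_nil, mul_one]
      rw [map_sub, map_mul, map_mul, hA, hB, LinearMap.sub_apply, Module.End.mul_apply,
        Module.End.mul_apply, hvv, gamma_vac, singT_apply A (a 0) a rfl,
        singT_apply B (b 0) b rfl]
    | succ n ih =>
      intro a b
      rw [List.ofFn_succ, List.prod_cons, map_mul, Module.End.mul_apply,
        show (fun i : Fin (n+1) =>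
            iA (Unitization.inr (a i.succ)) * iB (Unitization.inr (b i.succ)) -
            iB (Unitization.inr (b i.succ)) * iA (Unitization.inr (a i.succ)))
          = (fun i : Fin (n+1) =>
            iA (Unitization.inr (Fin.tail a i)) * iB (Unitization.inr (Fin.tail b i)) -
            iB (Unitization.inr (Fin.tail b i)) * iA (Unitization.inr (Fin.tail a i)))
          from rfl,
        ih (Fin.tail a) (Fin.tail b), map_sub, map_mul, map_mul, hA, hB,
        LinearMap.sub_apply, Module.End.mul_apply, Module.End.mul_apply, gamma_W,
        consT_tprod, consT_tprod, Fin.cons_self_tail, Fin.cons_self_tail]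
  have H1 : ∀ (j : ℕ) (a₀ : Unitization ℝ A) (a : Fin (j + 1) → A)
      (b₀ : Unitization ℝ B) (b : Fin (j + 1) → B),
      hmap (iA a₀ * iB b₀ *
          (List.ofFn (fun i : Fin (j + 1) =>
            iA (Unitization.inr (a i)) * iB (Unitization.inr (b i)) -
            iB (Unitization.inr (b i)) * iA (Unitization.inr (a i)))).prod)
        = DirectSum.of (Piece A B) (j + 1)
            ((a₀ ⊗ₜ[ℝ] PiTensorProduct.tprod ℝ a) ⊗ₜ[ℝ]
             (b₀ ⊗ₜ[ℝ] PiTensorProduct.tprod ℝ b)) := by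
    intro j a₀ a b₀ b
    rw [hmap_apply, map_mul, map_mul, Module.End.mul_apply, Module.End.mul_apply,
      Hn j a b, hB, betaAlg_W, hA, alphaAlg_apply, alphaFun_ofS, mul_one]
  have hsur : Function.Surjective hmap := by
    intro v
    have : v ∈ LinearMap.range hmap := by
      induction v using DirectSum.induction_on with
      | zero => exact zero_mem _
      | add x y hx hy => exact add_mem hx hy
      | of j x =>
        cases j with
        | zero =>
          induction x using TensorProduct.induction_on with
          | zero => rw [of0_zero]; exact zero_mem _
          | add u w hu hw => rw [of0_add]; exact add_mem hu hw
          | tmul a b => exact ⟨iA a * iB b, H0 a b⟩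
        | succ j =>
          induction x using TensorProduct.induction_on with
          | zero => rw [ofS_zero]; exact zero_mem _
          | add u w hu hw => rw [ofS_add]; exact add_mem hu hw
          | tmul u w =>
            induction u using TensorProduct.induction_on with
            | zero => rw [TensorProduct.zero_tmul, ofS_zero]; exact zero_mem _
            | add u₁ u₂ h₁ h₂ => rw [TensorProduct.add_tmul, ofS_add]; exact add_mem h₁ h₂
            | tmul a₀ s =>
              induction w using TensorProduct.induction_on with
              | zero => rw [TensorProduct.tmul_zero, ofS_zero]; exact zero_mem _
              | add w₁ w₂ k₁ k₂ =>
                rw [TensorProduct.tmul_add, ofS_add]; exact add_mem k₁ k₂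
              | tmul b₀ t =>
                induction s using PiTensorProduct.induction_on with
                | smul_tprod r a =>
                  induction t using PiTensorProduct.induction_on with
                  | smul_tprod q b =>
                    refine ⟨(r * q) • (iA a₀ * iB b₀ *
                      (List.ofFn (fun i : Fin (j + 1) =>
                        iA (Unitization.inr (a i)) * iB (Unitization.inr (b i)) -
                        iB (Unitization.inr (b i)) * iA (Unitization.inr (a i)))).prod), ?_⟩
                    rw [map_smul, H1 j a₀ a b₀ b]
                    simp only [← DirectSum.lof_eq_of ℝ, TensorProduct.tmul_smul,
                      ← TensorProduct.smul_tmul', map_smul, smul_smul, ofS_smul]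
                    rw [mul_comm r q]
                  | add t₁ t₂ k₁ k₂ =>
                    rw [show (a₀ ⊗ₜ[ℝ] (r • PiTensorProduct.tprod ℝ a)) ⊗ₜ[ℝ]
                          (b₀ ⊗ₜ[ℝ] (t₁ + t₂))
                        = (a₀ ⊗ₜ[ℝ] (r • PiTensorProduct.tprod ℝ a)) ⊗ₜ[ℝ] (b₀ ⊗ₜ[ℝ] t₁)
                        + (a₀ ⊗ₜ[ℝ] (r • PiTensorProduct.tprod ℝ a)) ⊗ₜ[ℝ] (b₀ ⊗ₜ[ℝ] t₂)
                        from by rw [← TensorProduct.tmul_add, ← TensorProduct.tmul_add],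
                      ofS_add]
                    exact add_mem k₁ k₂
                | add s₁ s₂ k₁ k₂ =>
                  rw [show (a₀ ⊗ₜ[ℝ] (s₁ + s₂)) ⊗ₜ[ℝ] (b₀ ⊗ₜ[ℝ] t)
                      = (a₀ ⊗ₜ[ℝ] s₁) ⊗ₜ[ℝ] (b₀ ⊗ₜ[ℝ] t)
                      + (a₀ ⊗ₜ[ℝ] s₂) ⊗ₜ[ℝ] (b₀ ⊗ₜ[ℝ] t)
                      from by rw [← TensorProduct.add_tmul, ← TensorProduct.tmul_add],
                    ofS_add]
                  exact add_mem k₁ k₂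
    obtain ⟨x, hx⟩ := this
    exact ⟨x, hx⟩
  refine ⟨(LinearEquiv.ofBijective hmap ⟨hinj, hsur⟩).symm, ?_, ?_⟩
  · intro a b
    erw [LinearEquiv.symm_apply_eq, LinearEquiv.ofBijective_apply]
    exact (H0 a b).symm
  · intro j a₀ a b₀ b
    erw [LinearEquiv.symm_apply_eq, LinearEquiv.ofBijective_apply]
    exact (H1 j a₀ a b₀ b).symm
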